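/- arXiv:1004.2480 — 3 statements merged into one kernel-verified Lean document; each statement's English description precedes it below -/
import Mathlib

section
/- Let L/K be a finite separable extension of local fields and let d be an integer. Then every element of L of valuation d has non-zero trace over K if and only if both of the following hold: (1) L/K is totally ramified, and (2) d ≡ −d_{L/K} − 1 (mod [L:K]), where d_{L/K} is the valuation of the different of L/K. -/
/-!
Fix `y ∈ L` of valuation `-d - 1` whose trace is not integral; it exists by the defining
property of the different. The multiples `c y`, `c ∈ K`, realise every trace, with `v_K(c)`
exceeding the valuation of the trace by at least one. So if `d₀ ≢ -d - 1 (mod e)`, each `x` of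
valuation `d₀` has the same trace as some `c y` of larger valuation, and `x - c y` has trace
zero. At valuation `-d - 1`, comparing `Tr(u y)` with `Tr(y)` for units `u` shows that all
traces are nonzero exactly when every unit of `L` is congruent modulo `𝔭_L` to an element of
`K`, i.e. when the residue degree is one. Finally the residue degree is one iff `e = [L : K]`:
a unit `u` not congruent to `K` makes the `2e` elements `πⁱ, u πⁱ` (`i < e`) independent, while
in residue degree one the powers `πⁱ` span `L`, since successive approximation converges by
completeness of `K`.
-/

/-- A local field structure on a field `K`: a normalized (surjective) discrete
valuation `v : K* ↠ ℤ`, extended by a junk value at `0`, with respect to which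
`K` is complete. -/
structure LocalFieldStruct (K : Type) [Field K] where
  /-- the valuation; its value at `0` is irrelevant -/
  v : K → ℤ
  v_mul : ∀ x y : K, x ≠ 0 → y ≠ 0 → v (x * y) = v x + v y
  v_add : ∀ x y : K, x ≠ 0 → y ≠ 0 → x + y ≠ 0 → min (v x) (v y) ≤ v (x + y)
  v_surj : ∀ n : ℤ, ∃ x : K, x ≠ 0 ∧ v x = n
  complete : ∀ a : ℕ → K,
      (∀ N : ℤ, ∃ M : ℕ, ∀ m : ℕ, M ≤ m → ∀ n : ℕ, M ≤ n →
        a m = a n ∨ N ≤ v (a m - a n)) →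
      ∃ x : K, ∀ N : ℤ, ∃ M : ℕ, ∀ n : ℕ, M ≤ n → a n = x ∨ N ≤ v (a n - x)

namespace LocalFieldStruct

variable {K L : Type} [Field K] [Field L]

/-- `x` lies in the valuation ring `O_K`. -/
def Integral (w : LocalFieldStruct K) (x : K) : Prop :=
  x = 0 ∨ 0 ≤ w.v x

/-- The residue characteristic of `K` is the prime `p`, i.e. `p` maps to `0`
in the residue field of the valuation ring. -/
def ResidueCharP (w : LocalFieldStruct K) (p : ℕ) : Prop :=
  p.Prime ∧ ((p : K) = 0 ∨ 0 < w.v (p : K))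

/-- `K` has mixed characteristic `(0, p)`: `K` has characteristic `0` and its
residue field has characteristic `p > 0`. -/
def MixedChar (w : LocalFieldStruct K) (p : ℕ) : Prop :=
  CharZero K ∧ p.Prime ∧ 0 < w.v (p : K)

/-- `e` is the ramification index `e_{L/K}`: the valuation of `L` restricted to
`K` is `e` times the valuation of `K`. -/
def IsRamificationIndex (wK : LocalFieldStruct K) (wL : LocalFieldStruct L)
    [Algebra K L] (e : ℕ) : Prop :=
  0 < e ∧ ∀ x : K, x ≠ 0 → wL.v (algebraMap K L x) = (e : ℤ) * wK.v x

/-- `d` is the valuation `d_{L/K}` of the different of `L/K`, characterized by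
`Tr_{L/K}(𝔭_L^i) ⊆ O_K ↔ i ≥ -d` for all `i : ℤ`. -/
def IsDifferentVal (wK : LocalFieldStruct K) (wL : LocalFieldStruct L)
    [Algebra K L] (d : ℤ) : Prop :=
  ∀ i : ℤ,
    (∀ x : L, (x ≠ 0 → i ≤ wL.v x) → wK.Integral (Algebra.trace K L x)) ↔ -d ≤ i

end LocalFieldStruct

/-- `x` is a normal basis generator of `L` over `K`: the Galois conjugates of
`x` form a `K`-basis of `L`. -/
def IsNormalElement (K : Type) [Field K] {L : Type} [Field L] [Algebra K L]
    (x : L) : Prop :=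
  LinearIndependent K (fun σ : L ≃ₐ[K] L => σ x) ∧
    Submodule.span K (Set.range fun σ : L ≃ₐ[K] L => σ x) = ⊤

/-- The valuation criterion `VC(L/K)`, for an extension with ramification
index `e` and different of valuation `d`: every nonzero `x ∈ L` with
`v_L(x) ≡ -d-1 (mod e)` is a normal basis generator of `L` over `K`. -/
def VC (K : Type) [Field K] {L : Type} [Field L] [Algebra K L]
    (wL : LocalFieldStruct L) (e : ℕ) (d : ℤ) : Prop :=
  ∀ x : L, x ≠ 0 → Int.ModEq (e : ℤ) (wL.v x) (-d - 1) → IsNormalElement K x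


open Filter Algebra

theorem Algebra.trace_algebraMap_mul {K L : Type} [Field K] [Field L] [Algebra K L]
    (c : K) (x : L) : trace K L (algebraMap K L c * x) = c * trace K L x := by
  rw [← Algebra.smul_def, map_smul, smul_eq_mul]

namespace LocalFieldStruct

section Valuation

variable {K : Type} [Field K] {w : LocalFieldStruct K} {x y : K} {M N : ℤ}

theorem v_one (w : LocalFieldStruct K) : w.v 1 = 0 := by
  have h := w.v_mul 1 1 one_ne_zero one_ne_zero
  rw [mul_one] at h
  omega

theorem v_neg (hx : x ≠ 0) : w.v (-x) = w.v x := by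
  have h := w.v_mul (-1) (-1) (by norm_num) (by norm_num)
  rw [neg_mul_neg, one_mul, w.v_one] at h
  rw [← neg_one_mul, w.v_mul _ _ (by norm_num) hx]
  omega

theorem v_inv (hx : x ≠ 0) : w.v x⁻¹ = -w.v x := by
  have h := w.v_mul x x⁻¹ hx (inv_ne_zero hx)
  rw [mul_inv_cancel₀ hx, w.v_one] at h
  omega

theorem v_pow (hx : x ≠ 0) (n : ℕ) : w.v (x ^ n) = n * w.v x := by
  induction n with
  | zero => simpa using w.v_one
  | succ n ih =>
    rw [pow_succ, w.v_mul _ _ (pow_ne_zero n hx) hx, ih]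
    push_cast
    ring

variable (w) in
/-- `x ∈ 𝔭^N`; the disjunct `x = 0` makes the junk value `v 0` irrelevant. -/
def MemIdealPow (N : ℤ) (x : K) : Prop :=
  x = 0 ∨ N ≤ w.v x

theorem memIdealPow_zero (N : ℤ) : w.MemIdealPow N 0 :=
  Or.inl rfl

theorem memIdealPow_v (x : K) : w.MemIdealPow (w.v x) x :=
  Or.inr le_rfl

theorem memIdealPow_inv (hx : x ≠ 0) : w.MemIdealPow (-w.v x) x⁻¹ :=
  v_inv hx ▸ memIdealPow_v x⁻¹

theorem memIdealPow_of_imp (h : x ≠ 0 → N ≤ w.v x) : w.MemIdealPow N x :=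
  or_iff_not_imp_left.mpr h

theorem MemIdealPow.le (h : w.MemIdealPow N x) (hx : x ≠ 0) : N ≤ w.v x :=
  h.resolve_left hx

theorem MemIdealPow.mono (h : w.MemIdealPow N x) (hMN : M ≤ N) : w.MemIdealPow M x :=
  h.imp_right hMN.trans

theorem MemIdealPow.add (hx : w.MemIdealPow N x) (hy : w.MemIdealPow N y) :
    w.MemIdealPow N (x + y) := by
  refine memIdealPow_of_imp fun hxy => ?_
  rcases eq_or_ne x 0 with rfl | hx0
  · simpa using hy.le (by simpa using hxy)
  rcases eq_or_ne y 0 with rfl | hy0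
  · simpa using hx.le hx0
  exact le_min (hx.le hx0) (hy.le hy0) |>.trans (w.v_add x y hx0 hy0 hxy)

theorem MemIdealPow.neg (hx : w.MemIdealPow N x) : w.MemIdealPow N (-x) :=
  memIdealPow_of_imp fun h => by
    rw [v_neg (neg_ne_zero.mp h)]
    exact hx.le (neg_ne_zero.mp h)

theorem MemIdealPow.sub (hx : w.MemIdealPow N x) (hy : w.MemIdealPow N y) :
    w.MemIdealPow N (x - y) := by
  simpa only [sub_eq_add_neg] using hx.add hy.neg

theorem MemIdealPow.sum {ι : Type*} {s : Finset ι} {f : ι → K}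
    (h : ∀ i ∈ s, w.MemIdealPow N (f i)) : w.MemIdealPow N (∑ i ∈ s, f i) := by
  classical
  induction s using Finset.induction_on with
  | empty => exact memIdealPow_zero N
  | insert a s ha ih =>
    rw [Finset.sum_insert ha]
    exact (h a (by simp)).add (ih fun i hi => h i (by simp [hi]))

theorem MemIdealPow.mul (hx : w.MemIdealPow M x) (hy : w.MemIdealPow N y) :
    w.MemIdealPow (M + N) (x * y) :=
  memIdealPow_of_imp fun hxy => by
    obtain ⟨hx0, hy0⟩ := mul_ne_zero_iff.mp hxy
    rw [w.v_mul x y hx0 hy0]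
    exact add_le_add (hx.le hx0) (hy.le hy0)

theorem eq_zero_of_forall_memIdealPow (h : ∀ N, w.MemIdealPow N x) : x = 0 :=
  by_contra fun hx => by have := (h (w.v x + 1)).le hx; omega

theorem add_ne_zero_and_v_add_eq (hx : x ≠ 0) (hy : w.MemIdealPow (w.v x + 1) y) :
    x + y ≠ 0 ∧ w.v (x + y) = w.v x := by
  have hsmall : ¬ w.MemIdealPow (w.v x + 1) (x + y) := fun h => by
    have := (h.sub hy).le (by simpa using hx)
    simp at this
  have hxy : x + y ≠ 0 := fun h => hsmall (h ▸ memIdealPow_zero _)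
  have hle : w.v x ≤ w.v (x + y) := ((memIdealPow_v x).add (hy.mono (by omega))).le hxy
  exact ⟨hxy, le_antisymm (not_lt.mp fun h => hsmall (Or.inr (by omega))) hle⟩

theorem _root_.Fin.eq_of_intModEq {e : ℕ} {i j : Fin e}
    (h : ((i : ℕ) : ℤ) ≡ (j : ℕ) [ZMOD e]) : i = j :=
  Fin.ext ((Int.natCast_modEq_iff.mp h).eq_of_lt_of_lt i.2 j.2)

theorem sum_ne_zero_and_v_sum_le {e : ℕ} {F : Fin e → K}
    (hF : ∀ i, F i ≠ 0 → w.v (F i) ≡ (i : ℕ) [ZMOD e]) {j : Fin e} (hj : F j ≠ 0) :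
    ∑ i, F i ≠ 0 ∧ w.v (∑ i, F i) ≤ w.v (F j) := by
  classical
  obtain ⟨i₀, hi₀, hmin⟩ := (Finset.univ.filter (F · ≠ 0)).exists_min_image (w.v ∘ F)
    ⟨j, by simpa using hj⟩
  simp only [Finset.mem_filter, Finset.mem_univ, true_and, Function.comp_apply] at hi₀ hmin
  have hrest : w.MemIdealPow (w.v (F i₀) + 1) (∑ i ∈ Finset.univ.erase i₀, F i) := by
    refine MemIdealPow.sum fun i hi => memIdealPow_of_imp fun hi0 => ?_
    have hne : w.v (F i) ≠ w.v (F i₀) := fun heq =>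
      Finset.ne_of_mem_erase hi (Fin.eq_of_intModEq ((hF i hi0).symm.trans (heq ▸ hF i₀ hi₀)))
    have := hmin i hi0
    omega
  rw [← Finset.add_sum_erase _ _ (Finset.mem_univ i₀)]
  obtain ⟨hne, hv⟩ := add_ne_zero_and_v_add_eq hi₀ hrest
  exact ⟨hne, hv ▸ hmin j hj⟩

theorem exists_limit {a : ℕ → K}
    (h : ∀ m n : ℕ, w.MemIdealPow (min m n : ℕ) (a m - a n)) :
    ∃ x, ∀ N : ℤ, ∀ᶠ n in atTop, w.MemIdealPow N (a n - x) := by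
  obtain ⟨x, hx⟩ := w.complete a fun N => ⟨N.toNat, fun m hm n hn =>
    (h m n).imp sub_eq_zero.mp fun hv => le_trans (by omega) hv⟩
  refine ⟨x, fun N => ?_⟩
  obtain ⟨M, hM⟩ := hx N
  exact eventually_atTop.mpr ⟨M, fun n hn => (hM n hn).imp_left sub_eq_zero.mpr⟩

end Valuation

section Extension

variable {K L : Type} [Field K] [Field L] [Algebra K L]
  {wK : LocalFieldStruct K} {wL : LocalFieldStruct L} {e : ℕ} {d : ℤ} {π : L}

theorem IsRamificationIndex.v_algebraMap (he : IsRamificationIndex wK wL e) {c : K}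
    (hc : c ≠ 0) : wL.v (algebraMap K L c) = e * wK.v c :=
  he.2 c hc

theorem IsRamificationIndex.memIdealPow_algebraMap (he : IsRamificationIndex wK wL e)
    {c : K} {N : ℤ} (hc : wK.MemIdealPow N c) : wL.MemIdealPow (e * N) (algebraMap K L c) :=
  memIdealPow_of_imp fun h => by
    have hc0 : c ≠ 0 := by simpa using h
    rw [he.v_algebraMap hc0]
    exact mul_le_mul_of_nonneg_left (hc.le hc0) (by positivity)

theorem IsDifferentVal.trace_memIdealPow (hd : IsDifferentVal wK wL d)
    (he : IsRamificationIndex wK wL e) {x : L} {k : ℤ} (hx : wL.MemIdealPow (-d + e * k) x) :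
    wK.MemIdealPow k (trace K L x) := by
  obtain ⟨c, hc0, hck⟩ := wK.v_surj (-k)
  have hcx : wL.MemIdealPow (-d) (algebraMap K L c * x) := by
    have := (he.memIdealPow_algebraMap (memIdealPow_v c)).mul hx
    rwa [hck, show (e : ℤ) * -k + (-d + e * k) = -d by ring] at this
  have hint : wK.MemIdealPow 0 (c * trace K L x) := by
    rw [← trace_algebraMap_mul]
    exact (hd (-d)).mpr le_rfl _ hcx.le
  have hcinv : wK.MemIdealPow k c⁻¹ := by simpa [hck] using memIdealPow_inv (w := wK) hc0
  simpa [hc0] using hcinv.mul hint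

theorem IsDifferentVal.exists_v_eq_trace_v_neg (hd : IsDifferentVal wK wL d)
    (he : IsRamificationIndex wK wL e) :
    ∃ y : L, y ≠ 0 ∧ wL.v y = -d - 1 ∧ trace K L y ≠ 0 ∧ wK.v (trace K L y) < 0 := by
  have hnot : ¬ ∀ x : L, (x ≠ 0 → -d - 1 ≤ wL.v x) → wK.Integral (trace K L x) :=
    fun h => by have := (hd (-d - 1)).mp h; omega
  push Not at hnot
  obtain ⟨y, hy, htr⟩ := hnot
  simp only [Integral, not_or, not_le] at htr
  have hy0 : y ≠ 0 := by rintro rfl; simp at htr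
  refine ⟨y, hy0, le_antisymm ?_ (hy hy0), htr⟩
  by_contra hlt
  have := (hd.trace_memIdealPow he (k := 0) (memIdealPow_of_imp fun _ => by omega)).le htr.1
  omega

theorem exists_memIdealPow_trace_mul_eq {y : L} (hy : trace K L y ≠ 0)
    (hyv : wK.v (trace K L y) < 0) {t : K} {k : ℤ} (ht : wK.MemIdealPow k t) :
    ∃ c : K, wK.MemIdealPow (k + 1) c ∧ trace K L (algebraMap K L c * y) = t := by
  refine ⟨t * (trace K L y)⁻¹, ?_, by rw [trace_algebraMap_mul, inv_mul_cancel_right₀ hy]⟩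
  exact (ht.mul (memIdealPow_inv hy)).mono (by omega)

variable (K) in
def TraceNeZeroAt (wL : LocalFieldStruct L) (n : ℤ) : Prop :=
  ∀ x : L, x ≠ 0 → wL.v x = n → trace K L x ≠ 0

variable (K) in
def ResidueDegreeOne (wL : LocalFieldStruct L) : Prop :=
  ∀ u : L, u ≠ 0 → wL.v u = 0 → ∃ c : K, wL.MemIdealPow 1 (u - algebraMap K L c)

theorem TraceNeZeroAt.of_modEq (he : IsRamificationIndex wK wL e) {m n : ℤ}
    (h : TraceNeZeroAt K wL m) (hmn : m ≡ n [ZMOD e]) : TraceNeZeroAt K wL n := by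
  intro x hx hxv htr
  obtain ⟨k, hk⟩ := hmn.dvd
  obtain ⟨c, hc0, hck⟩ := wK.v_surj (-k)
  have hcx : algebraMap K L c * x ≠ 0 := mul_ne_zero (by simpa using hc0) hx
  refine h _ hcx ?_ (by rw [trace_algebraMap_mul, htr, mul_zero])
  rw [wL.v_mul _ _ (by simpa using hc0) hx, he.v_algebraMap hc0, hck, hxv]
  linarith

theorem TraceNeZeroAt.modEq (hd : IsDifferentVal wK wL d) (he : IsRamificationIndex wK wL e)
    {n : ℤ} (h : TraceNeZeroAt K wL n) : n ≡ -d - 1 [ZMOD e] := by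
  by_contra hmod
  have he0 : (0 : ℤ) < e := by exact_mod_cast he.1
  set q := (n + d) / e
  set r := (n + d) % e
  have hqr : n + d = e * q + r := (Int.mul_ediv_add_emod _ _).symm
  have hr0 : 0 ≤ r := Int.emod_nonneg _ he0.ne'
  have hre : r < e := Int.emod_lt_of_pos _ he0
  have hr : r ≠ e - 1 := fun hr => hmod (Int.modEq_iff_dvd.mpr ⟨-(q + 1), by linarith⟩)
  obtain ⟨x, hx0, hxv⟩ := wL.v_surj n
  obtain ⟨y, hy0, hyv, hty, htyv⟩ := hd.exists_v_eq_trace_v_neg he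
  have htx : wK.MemIdealPow q (trace K L x) :=
    hd.trace_memIdealPow he (memIdealPow_of_imp fun _ => by omega)
  obtain ⟨c, hc, hcy⟩ := exists_memIdealPow_trace_mul_eq hty htyv htx
  -- `c y` has the trace of `x` but larger valuation, because `r ≤ e - 2`
  have hcy_small : wL.MemIdealPow (wL.v x + 1) (-(algebraMap K L c * y)) := by
    refine MemIdealPow.neg (((he.memIdealPow_algebraMap hc).mul
      (memIdealPow_v y)).mono ?_)
    rw [hyv, hxv]
    have : r ≤ e - 2 := by omega
    linarith [mul_add_one (e : ℤ) q]
  obtain ⟨hne, hv⟩ := add_ne_zero_and_v_add_eq hx0 hcy_small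
  rw [← sub_eq_add_neg] at hne hv
  exact h _ hne (hv.trans hxv) (by rw [map_sub, hcy, sub_self])

theorem residueDegreeOne_of_traceNeZeroAt (hd : IsDifferentVal wK wL d)
    (he : IsRamificationIndex wK wL e) (h : TraceNeZeroAt K wL (-d - 1)) :
    ResidueDegreeOne K wL := by
  intro u hu0 huv
  obtain ⟨y, hy0, hyv, hty, htyv⟩ := hd.exists_v_eq_trace_v_neg he
  have huy : wL.v (u * y) = -d - 1 := by rw [wL.v_mul _ _ hu0 hy0, huv, hyv, zero_add]
  have htuy : wK.MemIdealPow (-1) (trace K L (u * y)) :=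
    hd.trace_memIdealPow he (memIdealPow_of_imp fun _ => by nlinarith [he.1])
  obtain ⟨c, hc, hcy⟩ := exists_memIdealPow_trace_mul_eq hty htyv htuy
  refine ⟨c, ?_⟩
  -- `c` is chosen so that `(u - c) y` has trace zero; by `h` it then lies in `𝔭^{-d}`
  have hg : wL.MemIdealPow (-d - 1) ((u - algebraMap K L c) * y) := by
    rw [sub_mul]
    refine MemIdealPow.sub (huy ▸ memIdealPow_v _) ?_
    simpa [hyv] using (he.memIdealPow_algebraMap hc).mul (memIdealPow_v y)
  have hg' : wL.MemIdealPow (-d) ((u - algebraMap K L c) * y) := by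
    refine memIdealPow_of_imp fun hne => ?_
    have hv : wL.v ((u - algebraMap K L c) * y) ≠ -d - 1 :=
      fun hv => h _ hne hv (by rw [sub_mul, map_sub, hcy, sub_self])
    have := hg.le hne
    omega
  have := hg'.mul (memIdealPow_inv hy0)
  rw [mul_inv_cancel_right₀ hy0, hyv] at this
  exact this.mono (by omega)

theorem traceNeZeroAt_of_residueDegreeOne (hd : IsDifferentVal wK wL d)
    (he : IsRamificationIndex wK wL e) (hf : ResidueDegreeOne K wL) :
    TraceNeZeroAt K wL (-d - 1) := by
  intro x hx0 hxv htr
  obtain ⟨y, hy0, hyv, hty, htyv⟩ := hd.exists_v_eq_trace_v_neg he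
  have hu0 : x * y⁻¹ ≠ 0 := mul_ne_zero hx0 (inv_ne_zero hy0)
  have huv : wL.v (x * y⁻¹) = 0 := by
    rw [wL.v_mul _ _ hx0 (inv_ne_zero hy0), v_inv hy0, hxv, hyv]
    omega
  obtain ⟨c, hc⟩ := hf _ hu0 huv
  set g := x * y⁻¹ - algebraMap K L c
  -- `c` is a unit, so `c Tr(y)` is not integral while `Tr(g y)` is
  have hcv : algebraMap K L c ≠ 0 ∧ wL.v (algebraMap K L c) = 0 := by
    have := add_ne_zero_and_v_add_eq hu0 (by rw [huv]; exact hc.neg)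
    rwa [neg_sub, add_sub_cancel, huv] at this
  have hc0 : c ≠ 0 := by simpa using hcv.1
  have hcK : wK.v c = 0 := by
    have := hcv.2
    rw [he.v_algebraMap hc0] at this
    exact (mul_eq_zero.mp this).resolve_left (by exact_mod_cast he.1.ne')
  have hgy : wK.MemIdealPow 0 (trace K L (g * y)) :=
    hd.trace_memIdealPow he (by simpa [hyv] using hc.mul (memIdealPow_v y))
  have hcty : c * trace K L y ≠ 0 := mul_ne_zero hc0 hty
  have hcty_v : wK.v (c * trace K L y) < 0 := by
    rwa [wK.v_mul _ _ hc0 hty, hcK, zero_add]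
  have hsplit : trace K L x = c * trace K L y + trace K L (g * y) := by
    rw [← trace_algebraMap_mul, ← map_add, ← add_mul, add_sub_cancel,
      inv_mul_cancel_right₀ hy0]
  exact (add_ne_zero_and_v_add_eq hcty (hgy.mono (by omega))).1 (hsplit ▸ htr)

theorem v_smul_pow (he : IsRamificationIndex wK wL e) (hπ0 : π ≠ 0) (hπ : wL.v π = 1)
    {c : K} (hc : c ≠ 0) (i : ℕ) : wL.v (c • π ^ i) = e * wK.v c + i := by
  rw [Algebra.smul_def, wL.v_mul _ _ (by simpa using hc) (pow_ne_zero i hπ0),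
    he.v_algebraMap hc, v_pow hπ0, hπ, mul_one]

theorem card_mul_le_finrank [FiniteDimensional K L] (hπ0 : π ≠ 0) (hπ : wL.v π = 1)
    {ι : Type*} [Fintype ι] {b : ι → L}
    (hb : ∀ t : ι → K, t ≠ 0 →
      ∑ k, t k • b k ≠ 0 ∧ (e : ℤ) ∣ wL.v (∑ k, t k • b k)) :
    Fintype.card ι * e ≤ Module.finrank K L := by
  have hli : LinearIndependent K fun p : ι × Fin e => b p.1 * π ^ (p.2 : ℕ) := by
    rw [Fintype.linearIndependent_iff]
    intro g hg p
    by_contra hp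
    set F : Fin e → L := fun i => (∑ k, g (k, i) • b k) * π ^ (i : ℕ)
    have hF : ∀ i, F i ≠ 0 → wL.v (F i) ≡ (i : ℕ) [ZMOD e] := by
      intro i hi
      have hne : ∑ k, g (k, i) • b k ≠ 0 := left_ne_zero_of_mul hi
      have hgi : (fun k => g (k, i)) ≠ 0 := fun h0 => hne (by simp [fun k => congrFun h0 k])
      simp only [F]
      rw [wL.v_mul _ _ hne (pow_ne_zero _ hπ0), v_pow hπ0, hπ, mul_one]
      simpa using (Int.modEq_zero_iff_dvd.mpr (hb _ hgi).2).add_right ((i : ℕ) : ℤ)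
    have hFp : F p.2 ≠ 0 :=
      mul_ne_zero (hb _ fun h0 => hp (congrFun h0 p.1)).1 (pow_ne_zero _ hπ0)
    refine (sum_ne_zero_and_v_sum_le hF hFp).1 ?_
    rw [← hg, Fintype.sum_prod_type_right]
    simp only [F, Finset.sum_mul, smul_mul_assoc]
  simpa using hli.fintype_card_le_finrank

theorem IsRamificationIndex.le_finrank [FiniteDimensional K L]
    (he : IsRamificationIndex wK wL e) : e ≤ Module.finrank K L := by
  obtain ⟨π, hπ0, hπ⟩ := wL.v_surj 1
  have := card_mul_le_finrank (K := K) hπ0 hπ (b := fun _ : Unit => (1 : L)) fun t ht => by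
    have ht0 : t () ≠ 0 := fun h => ht (funext fun _ => h)
    simp only [Finset.univ_unique, Finset.sum_singleton, Algebra.smul_def, mul_one]
    exact ⟨by simpa using ht0, wK.v (t ()), he.v_algebraMap ht0⟩
  simpa using this

theorem IsRamificationIndex.residueDegreeOne [FiniteDimensional K L]
    (he : IsRamificationIndex wK wL e) (hen : e = Module.finrank K L) :
    ResidueDegreeOne K wL := by
  intro u hu0 huv
  by_contra hu
  push Not at hu
  have hshift (a : K) :
      algebraMap K L a + u ≠ 0 ∧ (e : ℤ) ∣ wL.v (algebraMap K L a + u) := by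
    have hz : ¬ wL.MemIdealPow 1 (algebraMap K L a + u) := by
      simpa [sub_eq_add_neg, add_comm] using hu (-a)
    simp only [MemIdealPow, not_or, not_le] at hz
    refine ⟨hz.1, ?_⟩
    rcases (show wL.v (algebraMap K L a + u) ≤ 0 by omega).lt_or_eq with hlt | heq
    · have hsmall : wL.MemIdealPow (wL.v (algebraMap K L a + u) + 1) (-u) :=
        memIdealPow_of_imp fun _ => by rw [v_neg hu0]; omega
      have := add_ne_zero_and_v_add_eq hz.1 hsmall
      rw [add_neg_cancel_right] at this
      have ha : a ≠ 0 := by simpa using this.1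
      exact ⟨wK.v a, by rw [← this.2, he.v_algebraMap ha]⟩
    · exact heq ▸ dvd_zero _
  obtain ⟨π, hπ0, hπ⟩ := wL.v_surj 1
  have := card_mul_le_finrank (K := K) hπ0 hπ (b := ![1, u]) fun t ht => by
    simp only [Fin.sum_univ_two, Matrix.cons_val_zero, Matrix.cons_val_one, Algebra.smul_def,
      mul_one]
    by_cases h1 : t 1 = 0
    · have h0 : t 0 ≠ 0 := fun h0 => ht (funext fun i => by fin_cases i <;> assumption)
      simp only [h1, map_zero, zero_mul, add_zero]
      exact ⟨by simpa using h0, wK.v (t 0), he.v_algebraMap h0⟩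
    · have h1L : algebraMap K L (t 1) ≠ 0 := by simpa using h1
      have hfac : algebraMap K L (t 0) + algebraMap K L (t 1) * u =
          algebraMap K L (t 1) * (algebraMap K L (t 0 / t 1) + u) := by
        rw [map_div₀]
        field_simp
      obtain ⟨hne, k, hk⟩ := hshift (t 0 / t 1)
      rw [hfac, wL.v_mul _ _ h1L hne, he.v_algebraMap h1, hk]
      exact ⟨mul_ne_zero h1L hne, wK.v (t 1) + k, by ring⟩
  have he0 := he.1
  simp only [Fintype.card_fin] at this
  omega

variable (K) in
def powExpansion (e : ℕ) (π : L) : (Fin e → K) →ₗ[K] L :=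
  Fintype.linearCombination K fun i : Fin e => π ^ (i : ℕ)

theorem memIdealPow_powExpansion_iff (he : IsRamificationIndex wK wL e) (hπ0 : π ≠ 0)
    (hπ : wL.v π = 1) {c : Fin e → K} {M : ℤ} :
    wL.MemIdealPow (e * M) (powExpansion K e π c) ↔ ∀ i, wK.MemIdealPow M (c i) := by
  simp only [powExpansion, Fintype.linearCombination_apply]
  constructor
  · intro h j
    refine memIdealPow_of_imp fun hj => ?_
    have hF (i : Fin e) (hi : c i • π ^ (i : ℕ) ≠ 0) :
        wL.v (c i • π ^ (i : ℕ)) ≡ (i : ℕ) [ZMOD e] := by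
      rw [v_smul_pow he hπ0 hπ (left_ne_zero_of_smul hi)]
      exact Int.modEq_iff_dvd.mpr ⟨-wK.v (c i), by ring⟩
    obtain ⟨hne, hle⟩ := sum_ne_zero_and_v_sum_le hF (smul_ne_zero hj (pow_ne_zero _ hπ0))
    have hlt : (e : ℤ) * M < e * (wK.v (c j) + 1) := by
      have := (h.le hne).trans hle
      rw [v_smul_pow he hπ0 hπ hj] at this
      linarith [j.2, mul_add_one (e : ℤ) (wK.v (c j))]
    have := lt_of_mul_lt_mul_left hlt (Int.natCast_nonneg e)
    omega
  · intro hc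
    refine MemIdealPow.sum fun i _ => ?_
    rw [Algebra.smul_def, ← add_zero ((e : ℤ) * M)]
    exact ((he.memIdealPow_algebraMap (hc i)).mul (memIdealPow_v _)).mono
      (by rw [v_pow hπ0, hπ]; omega)

theorem exists_sub_powExpansion_memIdealPow_v_add_one (he : IsRamificationIndex wK wL e)
    (hπ0 : π ≠ 0) (hπ : wL.v π = 1) (hf : ResidueDegreeOne K wL) {ρ : L} (hρ : ρ ≠ 0) :
    ∃ c : Fin e → K, wL.MemIdealPow (wL.v ρ + 1) (ρ - powExpansion K e π c) := by
  classical
  have he0 : (0 : ℤ) < e := by exact_mod_cast he.1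
  -- `ρ` has the valuation of `b πⁱ` where `v ρ = e q + i`, and `ρ / (b πⁱ)` is a unit
  set q := wL.v ρ / e
  set r := wL.v ρ % e
  have hqr : wL.v ρ = e * q + r := (Int.mul_ediv_add_emod _ _).symm
  have hr0 : 0 ≤ r := Int.emod_nonneg _ he0.ne'
  have hre : r < e := Int.emod_lt_of_pos _ he0
  let i : Fin e := ⟨r.toNat, by omega⟩
  obtain ⟨b, hb0, hbq⟩ := wK.v_surj q
  set β := b • π ^ (i : ℕ)
  have hβ0 : β ≠ 0 := smul_ne_zero hb0 (pow_ne_zero _ hπ0)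
  have hβv : wL.v β = wL.v ρ := by
    rw [v_smul_pow he hπ0 hπ hb0, hbq, hqr, Int.toNat_of_nonneg hr0]
  have hu0 : ρ * β⁻¹ ≠ 0 := mul_ne_zero hρ (inv_ne_zero hβ0)
  have huv : wL.v (ρ * β⁻¹) = 0 := by
    rw [wL.v_mul _ _ hρ (inv_ne_zero hβ0), v_inv hβ0, hβv, add_neg_cancel]
  obtain ⟨c, hc⟩ := hf _ hu0 huv
  refine ⟨Pi.single i (c * b), ?_⟩
  have hdiff : ρ - powExpansion K e π (Pi.single i (c * b)) =
      (ρ * β⁻¹ - algebraMap K L c) * β := by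
    rw [powExpansion, Fintype.linearCombination_apply_single, sub_mul,
      inv_mul_cancel_right₀ hβ0, mul_smul, Algebra.smul_def c]
  rw [hdiff, add_comm, ← hβv]
  exact hc.mul (memIdealPow_v β)

theorem exists_sub_powExpansion_memIdealPow (he : IsRamificationIndex wK wL e) (hπ0 : π ≠ 0)
    (hπ : wL.v π = 1) (hf : ResidueDegreeOne K wL) (x : L) (N : ℤ) :
    ∃ c : Fin e → K, wL.MemIdealPow N (x - powExpansion K e π c) := by
  suffices h : ∀ N, wL.v x ≤ N →
      ∃ c : Fin e → K, wL.MemIdealPow N (x - powExpansion K e π c) by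
    obtain ⟨c, hc⟩ := h (max N (wL.v x)) (le_max_right _ _)
    exact ⟨c, hc.mono (le_max_left _ _)⟩
  intro N hN
  induction N, hN using Int.leInduction with
  | base => exact ⟨0, by simpa using memIdealPow_v x⟩
  | succ N _ ih =>
    obtain ⟨c, hc⟩ := ih
    by_cases hρ : x - powExpansion K e π c = 0
    · exact ⟨c, hρ ▸ memIdealPow_zero _⟩
    obtain ⟨c', hc'⟩ := exists_sub_powExpansion_memIdealPow_v_add_one he hπ0 hπ hf hρ
    refine ⟨c + c', ?_⟩
    rw [map_add, ← sub_sub]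
    exact hc'.mono (by have := hc.le hρ; omega)

/-- The span of `πⁱ`, `i < e`, is closed; this is where the completeness of `K` enters. -/
theorem exists_powExpansion_eq_of_forall_approx (he : IsRamificationIndex wK wL e)
    (hπ0 : π ≠ 0) (hπ : wL.v π = 1) {x : L}
    (h : ∀ N, ∃ c : Fin e → K, wL.MemIdealPow N (x - powExpansion K e π c)) :
    ∃ c, powExpansion K e π c = x := by
  choose c hc using fun n : ℕ => h (e * n)
  have hcauchy (i : Fin e) (m n : ℕ) : wK.MemIdealPow (min m n : ℕ) (c m i - c n i) := by
    refine (memIdealPow_powExpansion_iff he hπ0 hπ (c := c m - c n)).mp ?_ i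
    have hmn : wL.MemIdealPow (e * (min m n : ℕ))
        ((x - powExpansion K e π (c n)) - (x - powExpansion K e π (c m))) :=
      ((hc n).mono (by gcongr; omega)).sub ((hc m).mono (by gcongr; omega))
    rwa [sub_sub_sub_cancel_left, ← map_sub] at hmn
  choose γ hγ using fun i => exists_limit (hcauchy i)
  refine ⟨γ, (sub_eq_zero.mp (eq_zero_of_forall_memIdealPow (w := wL) fun N => ?_)).symm⟩
  obtain ⟨n, hn, hcn⟩ := ((eventually_ge_atTop N.toNat).and
    (eventually_all.mpr fun i => hγ i N.toNat)).exists
  have hx : wL.MemIdealPow (e * N.toNat) (x - powExpansion K e π (c n)) :=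
    (hc n).mono (by gcongr)
  have hcγ : wL.MemIdealPow (e * N.toNat) (powExpansion K e π (c n - γ)) :=
    (memIdealPow_powExpansion_iff he hπ0 hπ).mpr hcn
  have := hx.add hcγ
  rw [map_sub, sub_add_sub_cancel] at this
  exact this.mono (by nlinarith [he.1, Int.self_le_toNat N])

theorem IsRamificationIndex.finrank_le (he : IsRamificationIndex wK wL e)
    (hf : ResidueDegreeOne K wL) : Module.finrank K L ≤ e := by
  obtain ⟨π, hπ0, hπ⟩ := wL.v_surj 1
  have hspan : Submodule.span K (Set.range fun i : Fin e => π ^ (i : ℕ)) = ⊤ := by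
    rw [← Fintype.range_linearCombination, LinearMap.range_eq_top]
    exact fun x => exists_powExpansion_eq_of_forall_approx he hπ0 hπ
      (exists_sub_powExpansion_memIdealPow he hπ0 hπ hf x)
  simpa using finrank_le_of_span_eq_top hspan

end Extension

end LocalFieldStruct

open LocalFieldStruct in
theorem statement0_general {K L : Type} [Field K] [Field L] [Algebra K L]
    [FiniteDimensional K L]
    (wK : LocalFieldStruct K) (wL : LocalFieldStruct L)
    (e : ℕ) (he : IsRamificationIndex wK wL e)
    (d : ℤ) (hd : IsDifferentVal wK wL d)
    (d₀ : ℤ) :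
    (∀ x : L, x ≠ 0 → wL.v x = d₀ → Algebra.trace K L x ≠ 0) ↔
      (e = Module.finrank K L ∧
        Int.ModEq (Module.finrank K L : ℤ) d₀ (-d - 1)) := by
  constructor
  · intro h
    have hmod : d₀ ≡ -d - 1 [ZMOD e] := TraceNeZeroAt.modEq hd he h
    have hf := residueDegreeOne_of_traceNeZeroAt hd he (TraceNeZeroAt.of_modEq he h hmod)
    have hen : e = Module.finrank K L := le_antisymm he.le_finrank (he.finrank_le hf)
    exact ⟨hen, hen ▸ hmod⟩
  · rintro ⟨hen, hmod⟩
    have hf := he.residueDegreeOne hen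
    exact (traceNeZeroAt_of_residueDegreeOne hd he hf).of_modEq he (hen ▸ hmod).symm

open LocalFieldStruct in
/-- **Proposition 1.** Let `L/K` be a finite separable extension of local fields
and let `d₀` be an integer.  Every element of `L` of valuation `d₀` has non-zero
trace over `K` if and only if (1) `L/K` is totally ramified, and
(2) `d₀ ≡ -d_{L/K} - 1 (mod [L:K])`. -/
theorem statement0 {K L : Type} [Field K] [Field L] [Algebra K L]
    [FiniteDimensional K L] [Algebra.IsSeparable K L]
    (wK : LocalFieldStruct K) (wL : LocalFieldStruct L)
    (e : ℕ) (he : IsRamificationIndex wK wL e)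
    (d : ℤ) (hd : IsDifferentVal wK wL d)
    (d₀ : ℤ) :
    (∀ x : L, x ≠ 0 → wL.v x = d₀ → Algebra.trace K L x ≠ 0) ↔
      (e = Module.finrank K L ∧
        Int.ModEq (Module.finrank K L : ℤ) d₀ (-d - 1)) :=
  statement0_general wK wL e he d hd d₀
end

section
/- Let L/K be a finite separable extension of local fields. For every integer i, the image of the fractional ideal 𝔭_L^{−d_{L/K}+i} under the trace map Tr_{L/K} equals 𝔭_K^{⌊i/e_{L/K}⌋}, where ⌊x⌋ denotes the largest integer n with n ≤ x. -/
/-!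
The trace is `K`-linear and multiplication by `c ∈ K*` shifts `L`-valuations by `e · v_K(c)`,
so `Tr(𝔭_L^{j + e k}) = 𝔭_K^k · Tr(𝔭_L^j)`. With `m = ⌊i/e⌋`, i.e. `e m ≤ i < e (m + 1)`,
the inclusion `Tr(𝔭_L^{-d}) ⊆ O_K` shifts to `Tr(𝔭_L^{-d+i}) ⊆ 𝔭_K^m`, while an element of
`𝔭_L^{-d-1}` with non-integral trace, scaled by some `c` with `v_K(c) = m + 1`, lies in
`𝔭_L^{-d+i}` and has trace of valuation at most `m`; its `O_K`-multiples give all of `𝔭_K^m`.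
-/

theorem Algebra.trace_algebraMap_mul_s1 {R S : Type*} [CommRing R] [CommRing S] [Algebra R S]
    (a : R) (z : S) : Algebra.trace R S (algebraMap R S a * z) = a * Algebra.trace R S z := by
  rw [← Algebra.smul_def, map_smul, smul_eq_mul]

theorem Int.mul_fdiv_le {e : ℤ} (he : 0 < e) (i : ℤ) : e * i.fdiv e ≤ i := by
  rw [Int.fdiv_eq_ediv_of_nonneg i he.le]
  exact Int.mul_ediv_self_le he.ne'

theorem Int.lt_mul_fdiv_add_one {e : ℤ} (he : 0 < e) (i : ℤ) : i < e * (i.fdiv e + 1) := by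
  rw [Int.fdiv_eq_ediv_of_nonneg i he.le, mul_comm]
  exact Int.lt_ediv_add_one_mul_self i he

namespace LocalFieldStruct

variable {K L : Type} [Field K] [Field L]

def maxIdealPow (w : LocalFieldStruct K) (n : ℤ) : Set K :=
  {x | x ≠ 0 → n ≤ w.v x}

section maxIdealPow

variable (w : LocalFieldStruct K) {m n : ℤ} {x y : K}

theorem zero_mem_maxIdealPow (n : ℤ) : (0 : K) ∈ w.maxIdealPow n :=
  fun h => absurd rfl h

theorem maxIdealPow_anti (h : m ≤ n) : w.maxIdealPow n ⊆ w.maxIdealPow m :=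
  fun _ hx hx0 => h.trans (hx hx0)

theorem mul_mem_maxIdealPow (hx : x ∈ w.maxIdealPow m) (hy : y ∈ w.maxIdealPow n) :
    x * y ∈ w.maxIdealPow (m + n) := by
  intro hxy
  obtain ⟨hx0, hy0⟩ := mul_ne_zero_iff.mp hxy
  rw [w.v_mul x y hx0 hy0]
  exact add_le_add (hx hx0) (hy hy0)

theorem mem_maxIdealPow_of_mul_mem (hx : x ≠ 0) (h : x * y ∈ w.maxIdealPow n) :
    y ∈ w.maxIdealPow (n - w.v x) := by
  intro hy
  have := h (mul_ne_zero hx hy)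
  rw [w.v_mul x y hx hy] at this
  omega

theorem integral_iff_mem_maxIdealPow_zero : w.Integral x ↔ x ∈ w.maxIdealPow 0 :=
  or_iff_not_imp_left

end maxIdealPow

variable [Algebra K L] {wK : LocalFieldStruct K} {wL : LocalFieldStruct L} {e : ℕ} {d : ℤ}

theorem IsRamificationIndex.algebraMap_mem_maxIdealPow (he : IsRamificationIndex wK wL e)
    (c : K) : algebraMap K L c ∈ wL.maxIdealPow (e * wK.v c) := by
  intro hc
  rw [he.2 c ((map_ne_zero _).mp hc)]

theorem IsRamificationIndex.algebraMap_mul_mem_maxIdealPow (he : IsRamificationIndex wK wL e)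
    {a : K} (ha : a ∈ wK.maxIdealPow 0) {n : ℤ} {z : L}
    (hz : z ∈ wL.maxIdealPow n) : algebraMap K L a * z ∈ wL.maxIdealPow n := by
  by_cases ha0 : a = 0
  · simpa [ha0] using wL.zero_mem_maxIdealPow n
  refine wL.maxIdealPow_anti ?_ (wL.mul_mem_maxIdealPow (he.algebraMap_mem_maxIdealPow a) hz)
  have := ha ha0
  nlinarith

theorem IsDifferentVal.trace_mem_maxIdealPow_zero (hd : IsDifferentVal wK wL d)
    {x : L} (hx : x ∈ wL.maxIdealPow (-d)) : Algebra.trace K L x ∈ wK.maxIdealPow 0 :=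
  (integral_iff_mem_maxIdealPow_zero wK).mp ((hd (-d)).mpr le_rfl x hx)

theorem IsDifferentVal.exists_trace_not_mem_maxIdealPow_zero (hd : IsDifferentVal wK wL d) :
    ∃ x ∈ wL.maxIdealPow (-d - 1), Algebra.trace K L x ∉ wK.maxIdealPow 0 := by
  by_contra! h
  have := (hd (-d - 1)).mp fun x hx => (integral_iff_mem_maxIdealPow_zero wK).mpr (h x hx)
  omega

theorem trace_image_maxIdealPow_subset (he : IsRamificationIndex wK wL e)
    (hd : IsDifferentVal wK wL d) (i : ℤ) :
    Algebra.trace K L '' wL.maxIdealPow (-d + i) ⊆ wK.maxIdealPow (i.fdiv e) := by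
  rintro _ ⟨x, hx, rfl⟩
  obtain ⟨c, hc0, hc⟩ := wK.v_surj (-i.fdiv e)
  have hcx : algebraMap K L c * x ∈ wL.maxIdealPow (-d) := by
    refine wL.maxIdealPow_anti ?_ (wL.mul_mem_maxIdealPow (he.algebraMap_mem_maxIdealPow c) hx)
    rw [hc]
    linarith [Int.mul_fdiv_le (e := e) (by exact_mod_cast he.1) i]
  have := hd.trace_mem_maxIdealPow_zero hcx
  rw [Algebra.trace_algebraMap_mul_s1] at this
  simpa [hc] using wK.mem_maxIdealPow_of_mul_mem hc0 this

theorem maxIdealPow_subset_trace_image (he : IsRamificationIndex wK wL e) {n : ℤ} {z : L}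
    (hz : z ∈ wL.maxIdealPow n) (htr : Algebra.trace K L z ≠ 0) :
    wK.maxIdealPow (wK.v (Algebra.trace K L z)) ⊆ Algebra.trace K L '' wL.maxIdealPow n := by
  intro y hy
  set t := Algebra.trace K L z
  have hy' : t * (y / t) ∈ wK.maxIdealPow (wK.v t) := by rwa [mul_div_cancel₀ y htr]
  have ha : y / t ∈ wK.maxIdealPow 0 := by
    simpa using wK.mem_maxIdealPow_of_mul_mem htr hy'
  refine ⟨algebraMap K L (y / t) * z, he.algebraMap_mul_mem_maxIdealPow ha hz, ?_⟩
  rw [Algebra.trace_algebraMap_mul_s1, div_mul_cancel₀ y htr]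

theorem exists_mem_maxIdealPow_v_trace_le (he : IsRamificationIndex wK wL e)
    (hd : IsDifferentVal wK wL d) (i : ℤ) :
    ∃ z ∈ wL.maxIdealPow (-d + i),
      Algebra.trace K L z ≠ 0 ∧ wK.v (Algebra.trace K L z) ≤ i.fdiv e := by
  obtain ⟨x, hx, hxtr⟩ := hd.exists_trace_not_mem_maxIdealPow_zero
  have htr0 : Algebra.trace K L x ≠ 0 := fun h => hxtr (h ▸ wK.zero_mem_maxIdealPow 0)
  have htr : wK.v (Algebra.trace K L x) < 0 := by
    by_contra! h
    exact hxtr fun _ => h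
  obtain ⟨c, hc0, hc⟩ := wK.v_surj (i.fdiv e + 1)
  refine ⟨algebraMap K L c * x, wL.maxIdealPow_anti ?_
    (wL.mul_mem_maxIdealPow (he.algebraMap_mem_maxIdealPow c) hx), ?_⟩
  · rw [hc]
    linarith [Int.lt_mul_fdiv_add_one (e := e) (by exact_mod_cast he.1) i]
  · rw [Algebra.trace_algebraMap_mul_s1, wK.v_mul c _ hc0 htr0, hc]
    exact ⟨mul_ne_zero hc0 htr0, by omega⟩

end LocalFieldStruct

open LocalFieldStruct in
theorem statement1_general {K L : Type} [Field K] [Field L] [Algebra K L]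
    (wK : LocalFieldStruct K) (wL : LocalFieldStruct L)
    (e : ℕ) (he : IsRamificationIndex wK wL e)
    (d : ℤ) (hd : IsDifferentVal wK wL d)
    (i : ℤ) :
    (fun x : L => Algebra.trace K L x) '' {x : L | x ≠ 0 → -d + i ≤ wL.v x} =
      {y : K | y ≠ 0 → Int.fdiv i (e : ℤ) ≤ wK.v y} := by
  obtain ⟨z, hz, htr0, htr⟩ := exists_mem_maxIdealPow_v_trace_le he hd i
  exact (trace_image_maxIdealPow_subset he hd i).antisymm
    ((wK.maxIdealPow_anti htr).trans (maxIdealPow_subset_trace_image he hz htr0))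

open LocalFieldStruct in
/-- For a finite separable extension `L/K` of local fields and every `i : ℤ`,
`Tr_{L/K}(𝔭_L^{-d_{L/K}+i}) = 𝔭_K^{⌊i/e_{L/K}⌋}`. -/
theorem statement1 {K L : Type} [Field K] [Field L] [Algebra K L]
    [FiniteDimensional K L] [Algebra.IsSeparable K L]
    (wK : LocalFieldStruct K) (wL : LocalFieldStruct L)
    (e : ℕ) (he : IsRamificationIndex wK wL e)
    (d : ℤ) (hd : IsDifferentVal wK wL d)
    (i : ℤ) :
    (fun x : L => Algebra.trace K L x) '' {x : L | x ≠ 0 → -d + i ≤ wL.v x} =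
      {y : K | y ≠ 0 → Int.fdiv i (e : ℤ) ≤ wK.v y} :=
  statement1_general wK wL e he d hd i
end

section
/- Let L/K be a totally ramified Galois extension of local fields whose degree n is a power of the residue characteristic p > 0. Then for every finite tamely ramified extension K̃/K (in a fixed algebraic closure), VC(K̃L/K̃) implies VC(L/K). -/
namespace LocalFieldStruct

section Multiplicative

variable {L : Type} [Field L] {N : L → ℤ}

theorem map_one_of_mul (hmul : ∀ x y : L, x ≠ 0 → y ≠ 0 → N (x * y) = N x + N y) :
    N 1 = 0 := by
  have := hmul 1 1 one_ne_zero one_ne_zero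
  rw [one_mul] at this
  omega

theorem map_inv_of_mul (hmul : ∀ x y : L, x ≠ 0 → y ≠ 0 → N (x * y) = N x + N y)
    {x : L} (hx : x ≠ 0) : N x⁻¹ = -N x := by
  have := hmul x x⁻¹ hx (inv_ne_zero hx)
  rw [mul_inv_cancel₀ hx, map_one_of_mul hmul] at this
  omega

theorem map_pow_of_mul (hmul : ∀ x y : L, x ≠ 0 → y ≠ 0 → N (x * y) = N x + N y)
    {x : L} (hx : x ≠ 0) (n : ℕ) : N (x ^ n) = n * N x := by
  induction n with
  | zero => simpa using map_one_of_mul hmul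
  | succ n ih =>
    rw [pow_succ, hmul _ _ (pow_ne_zero _ hx) hx, ih]
    push_cast
    ring

end Multiplicative

/-- An additive ultrametric valuation on a `K`-vector space, scaled by `g` against `w`; its value
at `0` is junk. -/
structure IsCompatibleNorm {K V : Type} [Field K] [AddCommGroup V] [Module K V]
    (w : LocalFieldStruct K) (g : ℕ) (N : V → ℤ) : Prop where
  min_le_add : ∀ x y : V, x ≠ 0 → y ≠ 0 → x + y ≠ 0 → min (N x) (N y) ≤ N (x + y)
  smul : ∀ (c : K) (x : V), c ≠ 0 → x ≠ 0 → N (c • x) = g * w.v c + N x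

section Norm

variable {K V : Type} [Field K] [AddCommGroup V] [Module K V]

theorem isCompatibleNorm_self (w : LocalFieldStruct K) : IsCompatibleNorm w 1 w.v :=
  ⟨w.v_add, fun c x hc hx => by rw [smul_eq_mul, w.v_mul c x hc hx, Nat.cast_one, one_mul]⟩

variable {w : LocalFieldStruct K} {g : ℕ} {N : V → ℤ}

namespace IsCompatibleNorm

theorem neg (hN : IsCompatibleNorm w g N) (x : V) : N (-x) = N x := by
  rcases eq_or_ne x 0 with rfl | hx
  · rw [neg_zero]
  have h1 : w.v 1 = 0 := map_one_of_mul w.v_mul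
  have h2 := w.v_mul (-1) (-1) (by norm_num) (by norm_num)
  rw [neg_one_mul, neg_neg, h1] at h2
  rw [← neg_one_smul K x, hN.smul _ _ (by norm_num) hx, show w.v (-1) = 0 by omega]
  ring

def geAddSubgroup (hN : IsCompatibleNorm w g N) (B : ℤ) : AddSubgroup V where
  carrier := {x | x = 0 ∨ B ≤ N x}
  zero_mem' := Or.inl rfl
  add_mem' := by
    rintro x y (rfl | hx) (rfl | hy)
    · simp
    · simp [hy]
    · simp [hx]
    rcases eq_or_ne x 0 with rfl | hx0
    · simp [hy]
    rcases eq_or_ne y 0 with rfl | hy0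
    · simp [hx]
    rcases eq_or_ne (x + y) 0 with hxy | hxy
    · exact Or.inl hxy
    · exact Or.inr ((le_min hx hy).trans (hN.min_le_add x y hx0 hy0 hxy))
  neg_mem' := by
    rintro x (rfl | hx)
    · simp
    · exact Or.inr (show B ≤ N (-x) by rwa [hN.neg])

theorem smul_mem_geAddSubgroup (hN : IsCompatibleNorm w g N) {c : K} {x : V} {B : ℤ}
    (h : c ≠ 0 → x ≠ 0 → B ≤ g * w.v c + N x) : c • x ∈ hN.geAddSubgroup B := by
  rcases eq_or_ne c 0 with rfl | hc
  · exact Or.inl (zero_smul K x)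
  rcases eq_or_ne x 0 with rfl | hx
  · exact Or.inl (smul_zero c)
  exact Or.inr ((hN.smul c x hc hx).symm ▸ h hc hx)

theorem add_eq_left (hN : IsCompatibleNorm w g N) {x y : V} (hx : x ≠ 0) (hy : y ≠ 0)
    (hlt : N x < N y) : x + y ≠ 0 ∧ N (x + y) = N x := by
  have hxy : x + y ≠ 0 := by
    intro h
    rw [eq_neg_of_add_eq_zero_right h, hN.neg] at hlt
    exact lt_irrefl _ hlt
  have h1 := hN.min_le_add x y hx hy hxy
  have h2 := hN.min_le_add (x + y) (-y) hxy (neg_ne_zero.mpr hy) (by simpa using hx)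
  rw [hN.neg, add_neg_cancel_right] at h2
  exact ⟨hxy, by omega⟩

theorem exists_eq_sum_of_pairwise_ne (hN : IsCompatibleNorm w g N) {ι : Type} (s : Finset ι)
    (x : ι → V) (hs : s.Nonempty) (hx : ∀ i ∈ s, x i ≠ 0)
    (hd : (s : Set ι).Pairwise fun i j => N (x i) ≠ N (x j)) :
    ∑ i ∈ s, x i ≠ 0 ∧
      ∃ i ∈ s, N (∑ j ∈ s, x j) = N (x i) ∧ ∀ j ∈ s, N (x i) ≤ N (x j) := by
  classical
  induction s using Finset.induction_on with
  | empty => exact absurd hs Finset.not_nonempty_empty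
  | @insert a s ha ih =>
    rcases s.eq_empty_or_nonempty with rfl | hsne
    · simpa using hx a (by simp)
    obtain ⟨hS, i, hi, hNi, hmin⟩ := ih hsne (fun j hj => hx j (Finset.mem_insert_of_mem hj))
      (hd.mono (by simp))
    have hne : N (x a) ≠ N (∑ j ∈ s, x j) := by
      rw [hNi]
      exact hd (by simp) (by simp [hi]) (by rintro rfl; exact ha hi)
    rw [Finset.sum_insert ha]
    rcases hne.lt_or_gt with hlt | hgt
    · obtain ⟨hsum, hval⟩ := hN.add_eq_left (hx a (by simp)) hS hlt
      refine ⟨hsum, a, by simp, hval, ?_⟩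
      simp only [Finset.mem_insert, forall_eq_or_imp, le_refl, true_and]
      exact fun j hj => (hNi ▸ hlt).le.trans (hmin j hj)
    · obtain ⟨hsum, hval⟩ := hN.add_eq_left hS (hx a (by simp)) hgt
      rw [add_comm] at hsum hval
      refine ⟨hsum, i, by simp [hi], hval.trans hNi, ?_⟩
      simp only [Finset.mem_insert, forall_eq_or_imp]
      exact ⟨hNi ▸ hgt.le, hmin⟩

theorem sum_smul_ne_zero_and_le (hN : IsCompatibleNorm w g N) {ι : Type} [Fintype ι]
    {b : ι → V} (hb0 : ∀ i, b i ≠ 0)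
    (hb : Pairwise fun i j => ¬ N (b i) ≡ N (b j) [ZMOD g]) {c : ι → K}
    (hc : ∃ i, c i ≠ 0) :
    ∑ i, c i • b i ≠ 0 ∧
      ∀ i, c i ≠ 0 → N (∑ j, c j • b j) ≤ N (c i • b i) := by
  classical
  obtain ⟨i₀, hi₀⟩ := hc
  rw [← Finset.sum_filter_of_ne (p := fun i => c i ≠ 0) fun i _ h => left_ne_zero_of_smul h]
  obtain ⟨hS, i, hi, hNi, hmin⟩ :=
    hN.exists_eq_sum_of_pairwise_ne {i | c i ≠ 0} (fun i => c i • b i)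
    ⟨i₀, by simpa using hi₀⟩ (fun i hi => smul_ne_zero (Finset.mem_filter.mp hi).2 (hb0 i))
    (fun i hi j hj hij heq => by
      simp only [Finset.coe_filter, Finset.mem_univ, true_and, Set.mem_ofPred_eq] at hi hj
      rw [hN.smul _ _ hi (hb0 i), hN.smul _ _ hj (hb0 j)] at heq
      exact hb hij (Int.modEq_iff_dvd.mpr ⟨w.v (c i) - w.v (c j), by linear_combination -heq⟩))
  exact ⟨hS, fun j hj => hNi ▸ hmin j (by simpa using hj)⟩

theorem linearIndependent_of_pairwise_not_modEq (hN : IsCompatibleNorm w g N) {ι : Type}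
    [Fintype ι] {b : ι → V} (hb0 : ∀ i, b i ≠ 0)
    (hb : Pairwise fun i j => ¬ N (b i) ≡ N (b j) [ZMOD g]) : LinearIndependent K b := by
  rw [Fintype.linearIndependent_iff]
  intro c hsum i
  by_contra hci
  exact (hN.sum_smul_ne_zero_and_le hb0 hb ⟨i, hci⟩).1 hsum

theorem eventually_sum_smul_sub_mem (hN : IsCompatibleNorm w g N) (hg : 0 < g) {ι : Type}
    [Fintype ι] (f : ι → V) {c : ℕ → ι → K} {l : ι → K}
    (hl : ∀ j, ∀ B : ℤ, ∃ M : ℕ, ∀ k, M ≤ k →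
      c k j = l j ∨ B ≤ w.v (c k j - l j))
    (B : ℤ) : ∀ᶠ k in Filter.atTop, ∑ j, (c k j - l j) • f j ∈ hN.geAddSubgroup B := by
  have hterm : ∀ j, ∀ᶠ k in Filter.atTop, (c k j - l j) • f j ∈ hN.geAddSubgroup B := by
    intro j
    obtain ⟨M, hM⟩ := hl j (max 0 (B - N (f j)))
    refine Filter.eventually_atTop.mpr ⟨M, fun k hk => hN.smul_mem_geAddSubgroup fun hc _ => ?_⟩
    have hv := (hM k hk).resolve_left (sub_ne_zero.mp hc)
    have hg' : (1 : ℤ) ≤ g := by exact_mod_cast hg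
    nlinarith [le_max_left 0 (B - N (f j)), le_max_right 0 (B - N (f j))]
  filter_upwards [Filter.eventually_all.mpr hterm] with k hk
  exact sum_mem fun j _ => hk j

/-- The span of `f` is closed, which is where completeness of `K` enters: if
`N (x₀ + u_k) → ∞` with `u_k` in the span, the coordinates of `u_k` are Cauchy by `hC`, and
their limit `u` would satisfy `N (x₀ + u) = ∞`. -/
theorem exists_bound_add (hN : IsCompatibleNorm w g N) (hg : 0 < g) {n : ℕ} {f : Fin n → V}
    (hf : LinearIndependent K f) {C : ℤ}
    (hC : ∀ (c : Fin n → K) (i : Fin n), c i ≠ 0 →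
      N (∑ j, c j • f j) ≤ C + g * w.v (c i))
    {x₀ : V} (hx₀ : x₀ ∉ Submodule.span K (Set.range f)) :
    ∃ D, ∀ c : Fin n → K, N (x₀ + ∑ j, c j • f j) ≤ D := by
  by_contra! hcon
  choose c hc using fun k : ℕ => hcon k
  have hx₀_add : ∀ d : Fin n → K, x₀ + ∑ j, d j • f j ≠ 0 := fun d h => hx₀ <| by
    rw [eq_neg_of_add_eq_zero_left h]
    exact neg_mem (sum_mem fun j _ => Submodule.smul_mem _ _ (Submodule.subset_span ⟨j, rfl⟩))
  have hmem : ∀ (k : ℕ) (B : ℤ), B ≤ k →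
      x₀ + ∑ j, c k j • f j ∈ hN.geAddSubgroup B :=
    fun k B hB => Or.inr (hB.trans (hc k).le)
  have hcauchy : ∀ j, ∃ l, ∀ B : ℤ, ∃ M : ℕ, ∀ k, M ≤ k →
      c k j = l ∨ B ≤ w.v (c k j - l) := by
    intro j
    refine w.complete _ fun B => ⟨(C + g * B).toNat, fun m hm m' hm' => ?_⟩
    rcases eq_or_ne (c m j) (c m' j) with h | h
    · exact Or.inl h
    have hne : ∑ i, (c m - c m') i • f i ≠ 0 := fun h0 =>
      h (sub_eq_zero.mp (Fintype.linearIndependent_iff.mp hf _ h0 j))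
    have hlow := sub_mem (hmem m (C + g * B) (by omega)) (hmem m' (C + g * B) (by omega))
    rw [add_sub_add_left_eq_sub, ← Finset.sum_sub_distrib] at hlow
    simp_rw [← sub_smul, ← Pi.sub_apply] at hlow
    have hup := hC (c m - c m') j (sub_ne_zero.mpr h)
    have : (g : ℤ) * B ≤ g * w.v (c m j - c m' j) := by
      rw [Pi.sub_apply] at hup
      linarith [hlow.resolve_left hne]
    exact Or.inr (le_of_mul_le_mul_left this (by exact_mod_cast hg))
  choose l hl using hcauchy
  set y := x₀ + ∑ j, l j • f j
  obtain ⟨k, hk, hsum⟩ := ((Filter.eventually_ge_atTop (N y + 1).toNat).and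
    (hN.eventually_sum_smul_sub_mem hg f hl (N y + 1))).exists
  have hy : y = (x₀ + ∑ j, c k j • f j) - ∑ j, (c k j - l j) • f j := by
    simp only [y, sub_smul, Finset.sum_sub_distrib]
    abel
  have := sub_mem (hmem k (N y + 1) (by omega)) hsum
  rw [← hy] at this
  exact absurd (this.resolve_left (hx₀_add l)) (by omega)

theorem exists_coord_bound (hN : IsCompatibleNorm w g N) (hg : 0 < g) :
    ∀ {n : ℕ} {e : Fin n → V}, LinearIndependent K e →
      ∃ C : ℤ, ∀ (c : Fin n → K) (i : Fin n), c i ≠ 0 →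
        N (∑ j, c j • e j) ≤ C + g * w.v (c i) := by
  intro n
  induction n with
  | zero => exact fun _ => ⟨0, fun _ i => i.elim0⟩
  | succ n ih =>
    intro e he
    have hD : ∀ i, ∃ D, ∀ c : Fin n → K,
        N (e i + ∑ j, c j • e (i.succAbove j)) ≤ D := by
      intro i
      obtain ⟨C, hC⟩ := ih (he.comp _ Fin.succAbove_right_injective)
      refine hN.exists_bound_add hg (he.comp _ Fin.succAbove_right_injective) hC ?_
      rw [Set.range_comp, Fin.range_succAbove]
      exact he.notMem_span_image (Set.notMem_compl_iff.mpr rfl)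
    choose D hD using hD
    obtain ⟨C, hC⟩ := (Set.finite_range D).bddAbove
    refine ⟨C, fun c i hci => ?_⟩
    set x := e i + ∑ j, (c (i.succAbove j) / c i) • e (i.succAbove j)
    have hx : ∑ j, c j • e j = c i • x := by
      simp only [x, smul_add, Finset.smul_sum, smul_smul, mul_div_cancel₀ _ hci]
      exact Fin.sum_univ_succAbove _ i
    have hx0 : x ≠ 0 := by
      intro h0
      rw [h0, smul_zero] at hx
      exact hci (Fintype.linearIndependent_iff.mp he c hx i)
    rw [hx, hN.smul _ _ hci hx0]
    linarith [hD i fun j => c (i.succAbove j) / c i, hC ⟨i, rfl⟩]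

theorem exists_le_of_le [FiniteDimensional K V] (hN : IsCompatibleNorm w g N) (hg : 0 < g)
    {g' : ℕ} {N' : V → ℤ} (hN' : IsCompatibleNorm w g' N') (hg' : 0 < g') (B : ℤ) :
    ∃ A : ℤ, ∀ x : V, x ≠ 0 → A ≤ N x → B ≤ N' x := by
  set e := Module.finBasis K V
  obtain ⟨C, hC⟩ := hN.exists_coord_bound hg e.linearIndependent
  obtain ⟨W, hW⟩ := (Set.finite_range fun j => N' (e j)).bddBelow
  refine ⟨C + g * |B - W|, fun x hx hA => ?_⟩
  have hmem : x ∈ hN'.geAddSubgroup B := by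
    rw [← e.sum_repr x]
    refine sum_mem fun j _ => hN'.smul_mem_geAddSubgroup fun hc _ => ?_
    have hcoord := hC (e.repr x) j hc
    rw [e.sum_repr] at hcoord
    have hv : |B - W| ≤ w.v (e.repr x j) :=
      le_of_mul_le_mul_left (a := (g : ℤ)) (by linarith) (by exact_mod_cast hg)
    have h1 : (1 : ℤ) ≤ g' := by exact_mod_cast hg'
    nlinarith [le_abs_self (B - W), abs_nonneg (B - W), hW ⟨j, rfl⟩]
  exact hmem.resolve_left hx

variable {V' : Type} [AddCommGroup V'] [Module K V']

theorem comp (hN : IsCompatibleNorm w g N) (f : V' →ₗ[K] V) (hf : Function.Injective f) :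
    IsCompatibleNorm w g (N ∘ f) where
  min_le_add x y hx hy hxy := by
    simpa using hN.min_le_add (f x) (f y) (by simpa [map_eq_zero_iff f hf] using hx)
      (by simpa [map_eq_zero_iff f hf] using hy) (by simpa [← map_add, map_eq_zero_iff f hf])
  smul c x hc hx := by
    simpa using hN.smul c (f x) hc (by simpa [map_eq_zero_iff f hf] using hx)

end IsCompatibleNorm

end Norm

section Extension

variable {K L : Type} [Field K] [Field L] [Algebra K L] [FiniteDimensional K L]
variable {w : LocalFieldStruct K} {g g' : ℕ} {N N' : L → ℤ}

namespace IsCompatibleNorm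

theorem pos_of_pos (hN : IsCompatibleNorm w g N) (hg : 0 < g)
    (hN' : IsCompatibleNorm w g' N') (hg' : 0 < g')
    (hmul : ∀ x y : L, x ≠ 0 → y ≠ 0 → N (x * y) = N x + N y)
    (hmul' : ∀ x y : L, x ≠ 0 → y ≠ 0 → N' (x * y) = N' x + N' y)
    {x : L} (hx : x ≠ 0) (hpos : 0 < N x) : 0 < N' x := by
  obtain ⟨A, hA⟩ := hN.exists_le_of_le hg hN' hg' 1
  have h := hA (x ^ (A.toNat + 1)) (pow_ne_zero _ hx)
  rw [map_pow_of_mul hmul hx, map_pow_of_mul hmul' hx] at h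
  push_cast at h
  have := h (by nlinarith [Int.self_le_toNat A])
  nlinarith [(by positivity : (0 : ℤ) ≤ A.toNat)]

theorem eq_zero_of_eq_zero (hN : IsCompatibleNorm w g N) (hg : 0 < g)
    (hN' : IsCompatibleNorm w g' N') (hg' : 0 < g')
    (hmul : ∀ x y : L, x ≠ 0 → y ≠ 0 → N (x * y) = N x + N y)
    (hmul' : ∀ x y : L, x ≠ 0 → y ≠ 0 → N' (x * y) = N' x + N' y)
    {x : L} (hx : x ≠ 0) (h0 : N x = 0) : N' x = 0 := by
  rcases lt_trichotomy (N' x) 0 with hlt | heq | hgt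
  · have := hN'.pos_of_pos hg' hN hg hmul' hmul (inv_ne_zero hx)
      (by rw [map_inv_of_mul hmul' hx]; omega)
    rw [map_inv_of_mul hmul hx] at this
    omega
  · exact heq
  · have := hN'.pos_of_pos hg' hN hg hmul' hmul hx hgt
    omega

theorem mul_apply_eq_mul_apply (hN : IsCompatibleNorm w g N) (hg : 0 < g)
    (hN' : IsCompatibleNorm w g' N') (hg' : 0 < g')
    (hmul : ∀ x y : L, x ≠ 0 → y ≠ 0 → N (x * y) = N x + N y)
    (hmul' : ∀ x y : L, x ≠ 0 → y ≠ 0 → N' (x * y) = N' x + N' y)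
    {x : L} (hx : x ≠ 0) : (g' : ℤ) * N x = g * N' x := by
  obtain ⟨u, hu, huv⟩ := w.v_surj (-N x)
  have hxg : x ^ g ≠ 0 := pow_ne_zero _ hx
  have hz : N (u • x ^ g) = 0 := by
    rw [hN.smul _ _ hu hxg, map_pow_of_mul hmul hx, huv]
    ring
  have hz' := hN.eq_zero_of_eq_zero hg hN' hg' hmul hmul' (smul_ne_zero hu hxg) hz
  rw [hN'.smul _ _ hu hxg, map_pow_of_mul hmul' hx, huv] at hz'
  linarith

end IsCompatibleNorm

end Extension

section RamificationIndex

variable {K L M : Type} [Field K] [Field L] [Field M] [Algebra K L] [Algebra L M] [Algebra K M]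
variable {wK : LocalFieldStruct K} {wL : LocalFieldStruct L} {wM : LocalFieldStruct M}

namespace IsRamificationIndex

theorem isCompatibleNorm {e : ℕ} (he : IsRamificationIndex wK wL e) :
    IsCompatibleNorm wK e wL.v where
  min_le_add := wL.v_add
  smul c x hc hx := by
    rw [Algebra.smul_def, wL.v_mul _ _ ((map_ne_zero _).mpr hc) hx, he.2 c hc]

theorem trans [IsScalarTower K L M] {e e' : ℕ} (he : IsRamificationIndex wK wL e)
    (he' : IsRamificationIndex wL wM e') : IsRamificationIndex wK wM (e' * e) := by
  refine ⟨Nat.mul_pos he'.1 he.1, fun c hc => ?_⟩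
  rw [IsScalarTower.algebraMap_apply K L M, he'.2 _ ((map_ne_zero _).mpr hc), he.2 c hc]
  push_cast
  ring

theorem linearIndependent {e : ℕ} (he : IsRamificationIndex wK wL e) {y : Fin e → L}
    (hy0 : ∀ j, y j ≠ 0) (hy : ∀ j, wL.v (y j) = j) : LinearIndependent K y := by
  refine he.isCompatibleNorm.linearIndependent_of_pairwise_not_modEq hy0 fun i j hij hmod => ?_
  rw [hy, hy, Int.natCast_modEq_iff] at hmod
  exact hij (Fin.ext (hmod.eq_of_lt_of_lt i.2 j.2))

theorem le_finrank_s7 [FiniteDimensional K L] {e : ℕ} (he : IsRamificationIndex wK wL e) :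
    e ≤ Module.finrank K L := by
  obtain ⟨π, hπ0, hπ⟩ := wL.v_surj 1
  have hli := he.linearIndependent (y := fun j => π ^ (j : ℕ)) (fun j => pow_ne_zero _ hπ0)
    (fun j => by rw [map_pow_of_mul wL.v_mul hπ0, hπ, mul_one])
  simpa using hli.fintype_card_le_finrank

theorem exists_basis {e : ℕ} (he : IsRamificationIndex wK wL e)
    (htot : e = Module.finrank K L) :
    ∃ b : Module.Basis (Fin e) K L, ∀ j, wL.v (b j) = j := by
  choose y hy0 hy using fun j : Fin e => wL.v_surj j
  have : Nonempty (Fin e) := ⟨⟨0, he.1⟩⟩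
  refine ⟨basisOfLinearIndependentOfCardEqFinrank (he.linearIndependent hy0 hy)
    (by rw [Fintype.card_fin, htot]), fun j => ?_⟩
  rw [coe_basisOfLinearIndependentOfCardEqFinrank, hy]

end IsRamificationIndex

end RamificationIndex

section Different

variable {K L : Type} [Field K] [Field L] [Algebra K L]
variable {wK : LocalFieldStruct K} {wL : LocalFieldStruct L} {d : ℤ}

theorem isDifferentVal_iff :
    IsDifferentVal wK wL d ↔
      (∀ x : L, (x ≠ 0 → -d ≤ wL.v x) → wK.Integral (Algebra.trace K L x)) ∧
        ∃ x : L, x ≠ 0 ∧ wL.v x = -d - 1 ∧ ¬ wK.Integral (Algebra.trace K L x) := by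
  constructor
  · intro hd
    have hint := (hd (-d)).mpr le_rfl
    obtain ⟨x, hx, hnot⟩ : ∃ x : L, (x ≠ 0 → -d - 1 ≤ wL.v x) ∧
        ¬ wK.Integral (Algebra.trace K L x) := by
      by_contra! h
      have := (hd (-d - 1)).mp h
      omega
    have hx0 : x ≠ 0 := by
      rintro rfl
      exact hnot (Or.inl (map_zero _))
    refine ⟨hint, x, hx0, ?_, hnot⟩
    by_contra hne
    exact hnot (hint x fun _ => by have := hx hx0; omega)
  · rintro ⟨hint, x, hx0, hxv, hnot⟩ i
    refine ⟨fun h => ?_, fun hi y hy => hint y fun hy0 => hi.trans (hy hy0)⟩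
    by_contra! hi
    exact hnot (h x fun _ => by omega)

namespace IsDifferentVal

theorem unique {d d' : ℤ} (hd : IsDifferentVal wK wL d) (hd' : IsDifferentVal wK wL d') :
    d = d' := by
  have h1 := (hd' (-d)).mp ((hd (-d)).mpr le_rfl)
  have h2 := (hd (-d')).mp ((hd' (-d')).mpr le_rfl)
  omega

theorem ediv_le_v_trace (hd : IsDifferentVal wK wL d) {e : ℕ}
    (he : IsRamificationIndex wK wL e) {y : L} (hy : y ≠ 0) (htr : Algebra.trace K L y ≠ 0) :
    (wL.v y + d) / e ≤ wK.v (Algebra.trace K L y) := by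
  set q := (wL.v y + d) / e
  have hq : q * e ≤ wL.v y + d := Int.ediv_mul_le _ (by exact_mod_cast he.1.ne')
  obtain ⟨u, hu, huv⟩ := wK.v_surj (-q)
  have huy : wL.v (u • y) = e * (-q) + wL.v y := by
    rw [he.isCompatibleNorm.smul u y hu hy, huv]
  have hint := (hd (-d)).mpr le_rfl (u • y) fun _ => by rw [huy]; linarith
  rw [map_smul, smul_eq_mul] at hint
  rcases hint with h0 | hpos
  · exact absurd h0 (mul_ne_zero hu htr)
  · rw [wK.v_mul u _ hu htr, huv] at hpos
    omega

end IsDifferentVal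

end Different

end LocalFieldStruct

section Compositum

variable {K Kt L M : Type} [Field K] [Field Kt] [Field L] [Field M]
    [Algebra K Kt] [Algebra K L] [Algebra Kt M] [Algebra L M] [Algebra K M]
    [IsScalarTower K Kt M] [IsScalarTower K L M]

theorem algebraMap_smul_eq (c : K) (y : L) :
    algebraMap L M (c • y) = algebraMap K Kt c • algebraMap L M y := by
  rw [Algebra.smul_def, map_mul, ← IsScalarTower.algebraMap_apply,
    IsScalarTower.algebraMap_apply K Kt M, ← Algebra.smul_def]

theorem span_range_algebraMap_eq_top [FiniteDimensional Kt M]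
    (hM : IntermediateField.adjoin Kt (Set.range (algebraMap L M)) = ⊤) :
    Submodule.span Kt (Set.range (algebraMap L M)) = ⊤ := by
  have hadj : Algebra.adjoin Kt (Set.range (algebraMap L M)) = ⊤ := by
    rw [← IntermediateField.adjoin_toSubalgebra_of_isAlgebraic
      fun x _ => Algebra.IsAlgebraic.isAlgebraic x, hM, IntermediateField.top_toSubalgebra]
  have hclosure : (Submonoid.closure (Set.range (algebraMap L M)) : Set M) ⊆
      Submodule.span Kt (Set.range (algebraMap L M)) := by
    have : Submonoid.closure (Set.range (algebraMap L M)) ≤ (algebraMap L M).range.toSubmonoid :=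
      Submonoid.closure_le.mpr fun x hx => hx
    exact fun x hx => Submodule.subset_span (this hx)
  rw [← Algebra.adjoin_eq_span_of_subset Kt hclosure, hadj, Algebra.top_toSubmodule]

theorem span_range_algebraMap_basis_eq_top {ι : Type} (b : Module.Basis ι K L)
    (hspan : Submodule.span Kt (Set.range (algebraMap L M)) = ⊤) :
    Submodule.span Kt (Set.range fun i => algebraMap L M (b i)) = ⊤ := by
  refine eq_top_iff.mpr (hspan ▸ Submodule.span_le.mpr ?_)
  rintro _ ⟨y, rfl⟩
  rw [← b.linearCombination_repr y, Finsupp.linearCombination_apply, Finsupp.sum, map_sum]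
  exact sum_mem fun i _ => algebraMap_smul_eq (Kt := Kt) (M := M) (b.repr y i) (b i) ▸
    Submodule.smul_mem _ _ (Submodule.subset_span ⟨i, rfl⟩)

theorem finrank_le_of_span_range_algebraMap [FiniteDimensional K L]
    (hspan : Submodule.span Kt (Set.range (algebraMap L M)) = ⊤) :
    Module.finrank Kt M ≤ Module.finrank K L :=
  (finrank_le_of_span_eq_top
    (span_range_algebraMap_basis_eq_top (Module.finBasis K L) hspan)).trans_eq
      (Fintype.card_fin _)

theorem repr_algebraMap_eq {ι : Type} [Fintype ι] (bL : Module.Basis ι K L)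
    (bM : Module.Basis ι Kt M) (hb : ∀ i, bM i = algebraMap L M (bL i)) (y : L) (i : ι) :
    bM.repr (algebraMap L M y) i = algebraMap K Kt (bL.repr y i) := by
  conv_lhs => rw [← bL.sum_repr y, map_sum]
  simp_rw [algebraMap_smul_eq (Kt := Kt), ← hb, bM.repr_sum_self]

theorem trace_algebraMap_eq {ι : Type} [Fintype ι] [DecidableEq ι] (bL : Module.Basis ι K L)
    (bM : Module.Basis ι Kt M) (hb : ∀ i, bM i = algebraMap L M (bL i)) (y : L) :
    Algebra.trace Kt M (algebraMap L M y) = algebraMap K Kt (Algebra.trace K L y) := by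
  rw [Algebra.trace_eq_matrix_trace bM, Algebra.trace_eq_matrix_trace bL,
    AddMonoidHom.map_trace (algebraMap K Kt)]
  congr 1
  ext i j
  rw [Algebra.leftMulMatrix_eq_repr_mul, Matrix.map_apply, Algebra.leftMulMatrix_eq_repr_mul,
    hb, ← map_mul, repr_algebraMap_eq bL bM hb]

theorem IsNormalElement.of_algebraMap [FiniteDimensional K L] [IsGalois K L]
    [FiniteDimensional Kt M] [IsGalois Kt M]
    (hspan : Submodule.span Kt (Set.range (algebraMap L M)) = ⊤)
    (hrank : Module.finrank Kt M = Module.finrank K L) {x : L}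
    (hx : IsNormalElement Kt (algebraMap L M x)) : IsNormalElement K x := by
  set r : (M ≃ₐ[Kt] M) → (L ≃ₐ[K] L) := fun σ => (σ.restrictScalars K).restrictNormal L
  have hr : ∀ σ y, algebraMap L M (r σ y) = σ (algebraMap L M y) := fun σ =>
    AlgEquiv.restrictNormal_commutes (σ.restrictScalars K) L
  have hinj : Function.Injective r := fun σ σ' h => AlgEquiv.ext <| LinearMap.congr_fun <|
    show (σ : M →ₗ[Kt] M) = σ' from LinearMap.ext_on hspan <| by
      rintro _ ⟨y, rfl⟩
      simp only [AlgEquiv.toLinearMap_apply, ← hr, h]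
  have hcard : Nat.card (M ≃ₐ[Kt] M) = Nat.card (L ≃ₐ[K] L) := by
    rw [IsGalois.card_aut_eq_finrank, IsGalois.card_aut_eq_finrank, hrank]
  set r' := Equiv.ofBijective r ((Function.Injective.bijective_of_nat_card_le hinj hcard.ge))
  have hli : LinearIndependent Kt fun τ : L ≃ₐ[K] L => algebraMap L M (τ x) := by
    convert hx.1.comp r'.symm r'.symm.injective with τ
    simp [r', ← hr, Equiv.ofBijective_apply_symm_apply]
  have hliK := (hli.restrict_scalars' K).of_comp (IsScalarTower.toAlgHom K L M).toLinearMap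
  refine ⟨hliK, hliK.span_eq_top_of_card_eq_finrank ?_⟩
  rw [← Nat.card_eq_fintype_card, IsGalois.card_aut_eq_finrank]

end Compositum

-- With `q = (m + d) / e`, one gets `e * (a + f * q) ≥ 1 - e`.
theorem Int.nonneg_add_mul_ediv_of_le {e f d a m : ℤ} (he : 0 < e) (hf : 0 ≤ f)
    (h : (e - 1) * (f - 1) - f * d ≤ e * a + f * m) : 0 ≤ a + f * ((m + d) / e) := by
  have hqr := Int.mul_ediv_add_emod (m + d) e
  have hr : f * ((m + d) % e) ≤ f * (e - 1) :=
    mul_le_mul_of_nonneg_left (by linarith [Int.emod_lt_of_pos (m + d) he]) hf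
  by_contra! hneg
  nlinarith

namespace LocalFieldStruct

section Compositum

variable {K Kt L M : Type} [Field K] [Field Kt] [Field L] [Field M]
    [Algebra K Kt] [Algebra K L] [Algebra Kt M] [Algebra L M] [Algebra K M]
    [IsScalarTower K Kt M] [IsScalarTower K L M]
variable {wK : LocalFieldStruct K} {wKt : LocalFieldStruct Kt}
    {wL : LocalFieldStruct L} {wM : LocalFieldStruct M} {eLK eKtK eMKt : ℕ} {dLK : ℤ}

theorem mul_v_algebraMap [FiniteDimensional K L] (heLK : IsRamificationIndex wK wL eLK)
    (heKtK : IsRamificationIndex wK wKt eKtK) (heMKt : IsRamificationIndex wKt wM eMKt)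
    {y : L} (hy : y ≠ 0) :
    (eLK : ℤ) * wM.v (algebraMap L M y) = (eMKt * eKtK : ℕ) * wL.v y := by
  have hmul : ∀ x y : L, x ≠ 0 → y ≠ 0 →
      wM.v (algebraMap L M (x * y)) = wM.v (algebraMap L M x) + wM.v (algebraMap L M y) :=
    fun x y hx hy => by
      rw [map_mul, wM.v_mul _ _ ((map_ne_zero _).mpr hx) ((map_ne_zero _).mpr hy)]
  exact ((heKtK.trans heMKt).isCompatibleNorm.comp (IsScalarTower.toAlgHom K L M).toLinearMap
      (algebraMap L M).injective).mul_apply_eq_mul_apply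
    (Nat.mul_pos heMKt.1 heKtK.1) heLK.isCompatibleNorm heLK.1 hmul wL.v_mul hy

theorem ramificationIndex_eq_of_coprime [FiniteDimensional K L] [FiniteDimensional Kt M]
    (heLK : IsRamificationIndex wK wL eLK) (heKtK : IsRamificationIndex wK wKt eKtK)
    (heMKt : IsRamificationIndex wKt wM eMKt) (htot : eLK = Module.finrank K L)
    (hcop : eLK.Coprime eKtK) (hspan : Submodule.span Kt (Set.range (algebraMap L M)) = ⊤) :
    eMKt = eLK ∧ Module.finrank Kt M = eLK := by
  obtain ⟨π, hπ0, hπ⟩ := wL.v_surj 1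
  have h := mul_v_algebraMap heLK heKtK heMKt hπ0 (M := M)
  rw [hπ, mul_one] at h
  have hdvd : eLK ∣ eMKt :=
    hcop.dvd_of_dvd_mul_right (Int.natCast_dvd_natCast.mp ⟨_, h.symm⟩)
  have h1 := heMKt.le_finrank_s7
  have h2 := finrank_le_of_span_range_algebraMap hspan (K := K)
  have h3 := Nat.le_of_dvd heMKt.1 hdvd
  omega

theorem integral_trace_smul_algebraMap (heLK : IsRamificationIndex wK wL eLK)
    (hdLK : IsDifferentVal wK wL dLK) (heKtK : IsRamificationIndex wK wKt eKtK)
    {c : Kt} {y : L}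
    (h : c ≠ 0 → y ≠ 0 →
      ((eLK : ℤ) - 1) * (eKtK - 1) - eKtK * dLK ≤ eLK * wKt.v c + eKtK * wL.v y) :
    wKt.Integral (c * algebraMap K Kt (Algebra.trace K L y)) := by
  rcases eq_or_ne c 0 with rfl | hc
  · exact Or.inl (zero_mul _)
  rcases eq_or_ne (Algebra.trace K L y) 0 with htr | htr
  · exact Or.inl (by rw [htr, map_zero, mul_zero])
  have hy : y ≠ 0 := by
    rintro rfl
    exact htr (map_zero _)
  right
  rw [wKt.v_mul _ _ hc ((map_ne_zero _).mpr htr), heKtK.2 _ htr]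
  have := hdLK.ediv_le_v_trace heLK hy htr
  nlinarith [Int.nonneg_add_mul_ediv_of_le (by exact_mod_cast heLK.1 : (0 : ℤ) < eLK)
    (by positivity : (0 : ℤ) ≤ eKtK) (h hc hy)]

theorem integral_trace_of_le (heLK : IsRamificationIndex wK wL eLK)
    (hdLK : IsDifferentVal wK wL dLK) (heKtK : IsRamificationIndex wK wKt eKtK)
    (heMKt : IsRamificationIndex wKt wM eLK) (hcop : eLK.Coprime eKtK)
    (bL : Module.Basis (Fin eLK) K L) (hbL : ∀ j, wL.v (bL j) = j)
    (bM : Module.Basis (Fin eLK) Kt M) (hb : ∀ j, bM j = algebraMap L M (bL j))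
    (hW : ∀ y : L, y ≠ 0 → wM.v (algebraMap L M y) = eKtK * wL.v y) {z : M}
    (hz : z ≠ 0 → ((eLK : ℤ) - 1) * (eKtK - 1) - eKtK * dLK ≤ wM.v z) :
    wKt.Integral (Algebra.trace Kt M z) := by
  rcases eq_or_ne z 0 with rfl | hz0
  · exact Or.inl (map_zero _)
  have hWb : ∀ j, wM.v (bM j) = (eKtK * j : ℕ) := fun j => by
    rw [hb, hW _ (bL.ne_zero j), hbL, Nat.cast_mul]
  have hdist : Pairwise fun i j => ¬ wM.v (bM i) ≡ wM.v (bM j) [ZMOD eLK] := by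
    intro i j hij hmod
    rw [hWb, hWb, Int.natCast_modEq_iff] at hmod
    exact hij (Fin.ext ((hmod.cancel_left_of_coprime hcop).eq_of_lt_of_lt i.2 j.2))
  have hc : ∃ j, bM.repr z j ≠ 0 := by
    by_contra! h
    exact hz0 (by rw [← bM.sum_repr z]; simp [h])
  have hle := (heMKt.isCompatibleNorm.sum_smul_ne_zero_and_le bM.ne_zero hdist hc).2
  rw [bM.sum_repr] at hle
  rw [← bM.sum_repr z, map_sum]
  refine AddSubgroup.sum_mem ((isCompatibleNorm_self wKt).geAddSubgroup 0) fun j _ => ?_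
  rw [map_smul, hb, trace_algebraMap_eq bL bM hb, smul_eq_mul]
  refine integral_trace_smul_algebraMap heLK hdLK heKtK fun hcj _ => ?_
  have := hle j hcj
  rw [heMKt.isCompatibleNorm.smul _ _ hcj (bM.ne_zero j), hb, hW _ (bL.ne_zero j)] at this
  linarith [hz hz0]

theorem exists_not_integral_trace (hdLK : IsDifferentVal wK wL dLK)
    (heKtK : IsRamificationIndex wK wKt eKtK) (heMKt : IsRamificationIndex wKt wM eLK)
    (bL : Module.Basis (Fin eLK) K L) (bM : Module.Basis (Fin eLK) Kt M)
    (hb : ∀ j, bM j = algebraMap L M (bL j))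
    (hW : ∀ y : L, y ≠ 0 → wM.v (algebraMap L M y) = eKtK * wL.v y) :
    ∃ z : M, z ≠ 0 ∧ wM.v z = ((eLK : ℤ) - 1) * (eKtK - 1) - eKtK * dLK - 1 ∧
      ¬ wKt.Integral (Algebra.trace Kt M z) := by
  obtain ⟨-, y, hy0, hyv, hnot⟩ := isDifferentVal_iff.mp hdLK
  obtain ⟨htr0, htrv⟩ : Algebra.trace K L y ≠ 0 ∧ wK.v (Algebra.trace K L y) < 0 := by
    simpa [Integral, not_or] using hnot
  obtain ⟨c, hc0, hcv⟩ := wKt.v_surj (eKtK - 1)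
  have hy0' : algebraMap L M y ≠ 0 := (map_ne_zero _).mpr hy0
  refine ⟨c • algebraMap L M y, smul_ne_zero hc0 hy0', ?_, ?_⟩
  · rw [heMKt.isCompatibleNorm.smul _ _ hc0 hy0', hcv, hW _ hy0, hyv]
    ring
  · rw [map_smul, trace_algebraMap_eq bL bM hb, smul_eq_mul]
    rintro (h0 | hpos)
    · exact mul_ne_zero hc0 ((map_ne_zero _).mpr htr0) h0
    · rw [wKt.v_mul _ _ hc0 ((map_ne_zero _).mpr htr0), hcv, heKtK.2 _ htr0] at hpos
      nlinarith

theorem isDifferentVal_compositum (heLK : IsRamificationIndex wK wL eLK)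
    (hdLK : IsDifferentVal wK wL dLK) (heKtK : IsRamificationIndex wK wKt eKtK)
    (heMKt : IsRamificationIndex wKt wM eLK) (hcop : eLK.Coprime eKtK)
    (bL : Module.Basis (Fin eLK) K L) (hbL : ∀ j, wL.v (bL j) = j)
    (bM : Module.Basis (Fin eLK) Kt M) (hb : ∀ j, bM j = algebraMap L M (bL j))
    (hW : ∀ y : L, y ≠ 0 → wM.v (algebraMap L M y) = eKtK * wL.v y) :
    IsDifferentVal wKt wM (eKtK * dLK - (eLK - 1) * (eKtK - 1)) := by
  rw [isDifferentVal_iff, neg_sub]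
  exact ⟨fun z hz => integral_trace_of_le heLK hdLK heKtK heMKt hcop bL hbL bM hb hW hz,
    exists_not_integral_trace hdLK heKtK heMKt bL bM hb hW⟩

end Compositum

end LocalFieldStruct

open LocalFieldStruct in
theorem statement7_general {K Kt L M : Type} [Field K] [Field Kt] [Field L] [Field M]
    [Algebra K Kt] [Algebra K L] [Algebra Kt M] [Algebra L M] [Algebra K M]
    [IsScalarTower K Kt M] [IsScalarTower K L M]
    (wK : LocalFieldStruct K) (wKt : LocalFieldStruct Kt)
    (wL : LocalFieldStruct L) (wM : LocalFieldStruct M)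
    (p : ℕ) (hp : wK.ResidueCharP p)
    -- `L/K` is a totally ramified Galois extension of degree a power of `p`:
    [FiniteDimensional K L] [IsGalois K L]
    (eLK : ℕ) (heLK : IsRamificationIndex wK wL eLK)
    (htot : eLK = Module.finrank K L)
    (hdeg : ∃ k : ℕ, Module.finrank K L = p ^ k)
    (dLK : ℤ) (hdLK : IsDifferentVal wK wL dLK)
    -- `Kt/K` is a finite tamely ramified extension:
    (eKtK : ℕ) (heKtK : IsRamificationIndex wK wKt eKtK)
    (dKtK : ℤ)
    (htame : ¬ (p ∣ eKtK) ∧ dKtK = (eKtK : ℤ) - 1)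
    -- `M = Kt·L` is the compositum of `Kt` and `L`:
    (hM : IntermediateField.adjoin Kt (Set.range (algebraMap L M)) = ⊤)
    [FiniteDimensional Kt M] [IsGalois Kt M]
    (eMKt : ℕ) (heMKt : IsRamificationIndex wKt wM eMKt)
    (dMKt : ℤ) (hdMKt : IsDifferentVal wKt wM dMKt)
    (h : VC Kt wM eMKt dMKt) :
    VC K wL eLK dLK := by
  intro x hx hxcong
  have hcop : eLK.Coprime eKtK := by
    obtain ⟨k, hk⟩ := hdeg
    rw [htot, hk]
    exact Nat.Coprime.pow_left k ((Nat.Prime.coprime_iff_not_dvd hp.1).mpr htame.1)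
  have hspan := span_range_algebraMap_eq_top hM
  obtain ⟨hE, hrank⟩ := ramificationIndex_eq_of_coprime heLK heKtK heMKt htot hcop hspan
  subst eMKt
  have hW : ∀ y : L, y ≠ 0 → wM.v (algebraMap L M y) = eKtK * wL.v y := fun y hy =>
    mul_left_cancel₀ (by exact_mod_cast heLK.1.ne' : (eLK : ℤ) ≠ 0) <| by
      rw [mul_v_algebraMap heLK heKtK heMKt hy]
      push_cast
      ring
  obtain ⟨bL, hbL⟩ := heLK.exists_basis htot
  let bM := basisOfTopLeSpanOfCardEqFinrank (fun j => algebraMap L M (bL j))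
    (span_range_algebraMap_basis_eq_top bL hspan).ge (by rw [Fintype.card_fin, hrank])
  have hd := hdMKt.unique (isDifferentVal_compositum heLK hdLK heKtK heMKt hcop bL hbL bM
    (fun j => by simp [bM]) hW)
  refine IsNormalElement.of_algebraMap hspan (hrank.trans htot) (h _ ((map_ne_zero _).mpr hx) ?_)
  rw [hW x hx, hd]
  exact (hxcong.mul_left _).trans (Int.modEq_iff_dvd.mpr ⟨eKtK - 1, by ring⟩)

open LocalFieldStruct in
/-- **Lemma (tame base change).** Let `L/K` be a totally ramified Galois
extension of local fields whose degree is a power of the residue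
characteristic `p > 0`.  For every finite tamely ramified extension `Kt/K`
(tame: `p ∤ e_{Kt/K}`, equivalently `d_{Kt/K} = e_{Kt/K} - 1`, with separable
residue extension), with `M = Kt·L` the compositum,
`VC(Kt·L/Kt)` implies `VC(L/K)`. -/
theorem statement7 {K Kt L M : Type} [Field K] [Field Kt] [Field L] [Field M]
    [Algebra K Kt] [Algebra K L] [Algebra Kt M] [Algebra L M] [Algebra K M]
    [IsScalarTower K Kt M] [IsScalarTower K L M]
    (wK : LocalFieldStruct K) (wKt : LocalFieldStruct Kt)
    (wL : LocalFieldStruct L) (wM : LocalFieldStruct M)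
    (p : ℕ) (hp : wK.ResidueCharP p)
    -- `L/K` is a totally ramified Galois extension of degree a power of `p`:
    [FiniteDimensional K L] [IsGalois K L]
    (eLK : ℕ) (heLK : IsRamificationIndex wK wL eLK)
    (htot : eLK = Module.finrank K L)
    (hdeg : ∃ k : ℕ, Module.finrank K L = p ^ k)
    (dLK : ℤ) (hdLK : IsDifferentVal wK wL dLK)
    -- `Kt/K` is a finite tamely ramified extension:
    [FiniteDimensional K Kt] [Algebra.IsSeparable K Kt]
    (eKtK : ℕ) (heKtK : IsRamificationIndex wK wKt eKtK)
    (dKtK : ℤ) (hdKtK : IsDifferentVal wK wKt dKtK)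
    (htame : ¬ (p ∣ eKtK) ∧ dKtK = (eKtK : ℤ) - 1)
    -- `M = Kt·L` is the compositum of `Kt` and `L`:
    (hM : IntermediateField.adjoin Kt (Set.range (algebraMap L M)) = ⊤)
    [FiniteDimensional Kt M] [IsGalois Kt M]
    (eMKt : ℕ) (heMKt : IsRamificationIndex wKt wM eMKt)
    (dMKt : ℤ) (hdMKt : IsDifferentVal wKt wM dMKt)
    (h : VC Kt wM eMKt dMKt) :
    VC K wL eLK dLK :=
  statement7_general wK wKt wL wM p hp eLK heLK htot hdeg dLK hdLK eKtK heKtK dKtK htame hM eMKt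
    heMKt dMKt hdMKt h
end
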